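/- For every n ∈ ℕ and every real polynomial P of degree ≤ n with nonnegative coefficients there exists a real polynomial P' of degree ≤ n with nonnegative coefficients such that: for all α > 0, all k ∈ ℝ⁴, all M > 0, all r ≥ M, all reals Λ, Λ₀ with 0 ≤ Λ ≤ Λ₀, and all reals m, μ with Λ ≤ m ≤ μ ≤ Λ₀ (playing the role of the minimum and maximum of the remaining scale parameters λ_j, j ∈ ℐ∖{a}), one has ∫_Λ^{Λ₀} λ^{−2} e^{−‖k‖²/(α λ²)} · P( log₊ max( r/min(λ,m), max(λ,μ)/M ) ) · min(λ,m)² dλ ≤ P'( log₊ max( r/m, μ/M ) ) · m. -/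

import Mathlib

open MeasureTheory Real

/-- `log₊(x) = log(max(1,x))`. -/
noncomputable def logPlus (x : ℝ) : ℝ := Real.log (max 1 x)

/-!
Put `x = m / t` and `L = log₊ max(r/m, μ/M)`. Moving the scale from `m` to `t` multiplies both
ratios inside the logarithm by at most `max(x, x⁻¹)`, so the argument of `P` is at most
`L + |log x|`, while the weight `t⁻² min(t,m)²` is `min(1,x)²` and the Gaussian factor is at most 1.
Since `|log x|^j ≤ (2j)^j max(x, x⁻¹)^(1/2)`, every monomial of `P(L + |log x|) min(1,x)²` is
bounded by `2^j (L^j + (2j)^j) √x min(1,x)`, and `∫₀^∞ √(m/t) min(1, m/t) dt = 4m`.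
-/

open Polynomial Set Finset

lemma logPlus_nonneg (x : ℝ) : 0 ≤ logPlus x := log_nonneg (le_max_left 1 x)

lemma logPlus_mono : Monotone logPlus := fun _ _ h =>
  log_le_log (one_pos.trans_le (le_max_left _ _)) (max_le_max_left 1 h)

lemma logPlus_mul_le {x y : ℝ} (hy : 0 ≤ y) :
    logPlus (x * y) ≤ logPlus x + logPlus y := by
  unfold logPlus
  rw [← log_mul (by positivity) (by positivity)]
  refine log_le_log (one_pos.trans_le (le_max_left _ _)) (max_le ?_ ?_)
  · nlinarith [le_max_left (1 : ℝ) x, le_max_left (1 : ℝ) y]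
  · gcongr <;> first | positivity | exact le_max_right _ _

lemma logPlus_max_inv_self {x : ℝ} (hx : 0 < x) : logPlus (max x x⁻¹) = |log x| := by
  unfold logPlus
  rcases le_total x 1 with h | h
  · rw [max_eq_right (h.trans (one_le_inv₀ hx |>.2 h)), max_eq_right (one_le_inv₀ hx |>.2 h),
      log_inv, abs_of_nonpos (log_nonpos hx.le h)]
  · rw [max_eq_left ((inv_le_one₀ hx).2 h |>.trans h), max_eq_right h, abs_of_nonneg (log_nonneg h)]

lemma logPlus_max_div_le {M r m μ t : ℝ} (hM : 0 < M) (hMr : M ≤ r) (hm : 0 < m) (hmμ : m ≤ μ)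
    (ht : 0 < t) :
    logPlus (max (r / min t m) (max t μ / M)) ≤ logPlus (max (r / m) (μ / M)) + |log (m / t)| := by
  have hr : 0 < r := hM.trans_le hMr
  have hμ : 0 < μ := hm.trans_le hmμ
  set X := max (r / m) (μ / M)
  set Y := max (m / t) (m / t)⁻¹
  have hX : 0 ≤ X := (div_pos hr hm).le.trans (le_max_left _ _)
  have hY : 1 ≤ Y := by
    rcases le_total (m / t) 1 with h | h
    · exact (one_le_inv₀ (div_pos hm ht)).2 h |>.trans (le_max_right _ _)
    · exact h.trans (le_max_left _ _)
  have hr_le : r / min t m ≤ X * Y := by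
    rcases le_total t m with h | h
    · rw [min_eq_left h, show r / t = r / m * (m / t) by field_simp]
      gcongr
      exacts [le_max_left _ _, le_max_left _ _]
    · rw [min_eq_right h]
      exact (le_max_left _ _).trans (le_mul_of_one_le_right hX hY)
  have hμ_le : max t μ / M ≤ X * Y := by
    rcases le_total t μ with h | h
    · rw [max_eq_right h]
      exact (le_max_right _ _).trans (le_mul_of_one_le_right hX hY)
    · rw [max_eq_left h, show t / M = μ / M * (t / μ) by field_simp]
      gcongr
      · exact le_max_right _ _
      · calc t / μ ≤ t / m := by gcongr
          _ = (m / t)⁻¹ := (inv_div m t).symm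
          _ ≤ Y := le_max_right _ _
  calc logPlus (max (r / min t m) (max t μ / M)) ≤ logPlus (X * Y) :=
        logPlus_mono (max_le hr_le hμ_le)
    _ ≤ logPlus X + logPlus Y := logPlus_mul_le (zero_le_one.trans hY)
    _ = logPlus X + |log (m / t)| := by rw [logPlus_max_inv_self (div_pos hm ht)]

lemma pow_log_le_mul_sqrt {x : ℝ} (hx : 1 ≤ x) (j : ℕ) : log x ^ j ≤ (2 * j) ^ j * √x := by
  rcases j.eq_zero_or_pos with rfl | hj
  · simpa using one_le_sqrt.2 hx
  have hε : (0 : ℝ) < 1 / (2 * j) := by positivity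
  calc log x ^ j ≤ (x ^ (1 / (2 * j : ℝ)) / (1 / (2 * j))) ^ j :=
        pow_le_pow_left₀ (log_nonneg hx) (log_le_rpow_div (by linarith) hε) j
    _ = (2 * j) ^ j * (x ^ (1 / (2 * j : ℝ))) ^ j := by
        rw [div_div_eq_mul_div, div_one, mul_comm, mul_pow]
    _ = (2 * j) ^ j * √x := by
        rw [← rpow_mul_natCast (by linarith), sqrt_eq_rpow]
        congr 2
        field_simp

lemma abs_log_pow_mul_min_sq_le {x : ℝ} (hx : 0 < x) (j : ℕ) :
    |log x| ^ j * min 1 x ^ 2 ≤ (2 * j) ^ j * (√x * min 1 x) := by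
  rcases le_total 1 x with h | h
  · rw [min_eq_left h, abs_of_nonneg (log_nonneg h)]
    simpa using pow_log_le_mul_sqrt h j
  · rw [min_eq_right h, abs_of_nonpos (log_nonpos hx.le h), ← log_inv]
    have hsx : √x⁻¹ * x ^ 2 = √x * x := by
      rw [sqrt_inv]
      have := sq_sqrt hx.le
      field_simp
      nlinarith
    calc log x⁻¹ ^ j * x ^ 2 ≤ (2 * j) ^ j * √x⁻¹ * x ^ 2 := by
          gcongr; exact pow_log_le_mul_sqrt ((one_le_inv₀ hx).2 h) j
      _ = (2 * j) ^ j * (√x * x) := by rw [mul_assoc, hsx]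

lemma Polynomial.eval_nonneg_of_coeff_nonneg {P : ℝ[X]} (hP : ∀ i, 0 ≤ P.coeff i) {x : ℝ}
    (hx : 0 ≤ x) : 0 ≤ P.eval x := by
  rw [eval_eq_sum_range]
  exact sum_nonneg fun i _ => mul_nonneg (hP i) (pow_nonneg hx i)

noncomputable def majorant (P : ℝ[X]) (n : ℕ) : ℝ[X] :=
  ∑ j ∈ range (n + 1), C (P.coeff j * 2 ^ j) * (X ^ j + C ((2 * j : ℝ) ^ j))

lemma eval_majorant (P : ℝ[X]) (n : ℕ) (L : ℝ) :
    (majorant P n).eval L = ∑ j ∈ range (n + 1), P.coeff j * 2 ^ j * (L ^ j + (2 * j) ^ j) := by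
  simp [majorant, eval_finsetSum]

lemma natDegree_majorant_le (P : ℝ[X]) (n : ℕ) : (majorant P n).natDegree ≤ n := by
  refine natDegree_sum_le_of_forall_le _ _ fun j hj => (natDegree_C_mul_le _ _).trans ?_
  refine (natDegree_add_le _ _).trans (max_le ?_ ?_)
  · exact (natDegree_X_pow_le j).trans (Nat.lt_succ_iff.1 (mem_range.1 hj))
  · exact (natDegree_C _).trans_le (Nat.zero_le n)

lemma coeff_majorant_nonneg {P : ℝ[X]} (hP : ∀ i, 0 ≤ P.coeff i) (n i : ℕ) :
    0 ≤ (majorant P n).coeff i := by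
  rw [majorant, finsetSum_coeff]
  refine sum_nonneg fun j _ => ?_
  rw [coeff_C_mul, coeff_add, coeff_X_pow, coeff_C]
  have := hP j
  split_ifs <;> positivity

lemma pow_mul_min_sq_le {A L x : ℝ} (hA : 0 ≤ A) (hL : 0 ≤ L) (hx : 0 < x)
    (hAL : A ≤ L + |log x|) (j : ℕ) :
    A ^ j * min 1 x ^ 2 ≤ 2 ^ j * (L ^ j + (2 * j) ^ j) * (√x * min 1 x) := by
  have hw : min 1 x ^ 2 ≤ √x * min 1 x := by simpa using abs_log_pow_mul_min_sq_le hx 0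
  have hsplit : A ^ j ≤ 2 ^ j * (L ^ j + |log x| ^ j) :=
    calc A ^ j ≤ (L + |log x|) ^ j := pow_le_pow_left₀ hA hAL j
      _ ≤ 2 ^ (j - 1) * (L ^ j + |log x| ^ j) := add_pow_le hL (abs_nonneg _) j
      _ ≤ 2 ^ j * (L ^ j + |log x| ^ j) := by gcongr; exacts [one_le_two, j.sub_le 1]
  calc A ^ j * min 1 x ^ 2 ≤ 2 ^ j * (L ^ j + |log x| ^ j) * min 1 x ^ 2 := by gcongr
    _ = 2 ^ j * (L ^ j * min 1 x ^ 2 + |log x| ^ j * min 1 x ^ 2) := by ring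
    _ ≤ 2 ^ j * (L ^ j * (√x * min 1 x) + (2 * j) ^ j * (√x * min 1 x)) := by
        gcongr 2 ^ j * (L ^ j * ?_ + ?_)
        exact abs_log_pow_mul_min_sq_le hx j
    _ = 2 ^ j * (L ^ j + (2 * j) ^ j) * (√x * min 1 x) := by ring

lemma eval_mul_min_sq_le {n : ℕ} {P : ℝ[X]} (hPdeg : P.natDegree ≤ n) (hP : ∀ i, 0 ≤ P.coeff i)
    {A L x : ℝ} (hA : 0 ≤ A) (hL : 0 ≤ L) (hx : 0 < x) (hAL : A ≤ L + |log x|) :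
    P.eval A * min 1 x ^ 2 ≤ (majorant P n).eval L * (√x * min 1 x) := by
  rw [eval_eq_sum_range' (Nat.lt_succ_of_le hPdeg), eval_majorant, sum_mul, sum_mul]
  refine sum_le_sum fun j _ => ?_
  simpa only [mul_assoc] using mul_le_mul_of_nonneg_left (pow_mul_min_sq_le hA hL hx hAL j) (hP j)

noncomputable def envelope (m t : ℝ) : ℝ := √(m / t) * min 1 (m / t)

lemma integrand_le_majorant_mul_envelope {n : ℕ} {P : ℝ[X]} (hPdeg : P.natDegree ≤ n)
    (hP : ∀ i, 0 ≤ P.coeff i) {c α M r m μ t : ℝ} (hc : 0 ≤ c) (hα : 0 < α) (hM : 0 < M)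
    (hMr : M ≤ r) (hm : 0 < m) (hmμ : m ≤ μ) (ht : 0 < t) :
    1 / t ^ 2 * exp (-c / (α * t ^ 2)) * P.eval (logPlus (max (r / min t m) (max t μ / M))) *
        min t m ^ 2 ≤ (majorant P n).eval (logPlus (max (r / m) (μ / M))) * envelope m t := by
  have hw : 1 / t ^ 2 * min t m ^ 2 = min 1 (m / t) ^ 2 := by
    rw [show min 1 (m / t) = min t m / t by rw [← min_div_div_right ht.le, div_self ht.ne']]
    ring
  have hexp : exp (-c / (α * t ^ 2)) ≤ 1 :=
    exp_le_one_iff.2 (div_nonpos_of_nonpos_of_nonneg (neg_nonpos.2 hc) (by positivity))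
  have key := eval_mul_min_sq_le hPdeg hP (logPlus_nonneg _) (logPlus_nonneg _) (div_pos hm ht)
    (logPlus_max_div_le hM hMr hm hmμ ht)
  calc _ = exp (-c / (α * t ^ 2)) *
        (P.eval (logPlus (max (r / min t m) (max t μ / M))) * min 1 (m / t) ^ 2) := by
        rw [← hw]; ring
    _ ≤ 1 * ((majorant P n).eval (logPlus (max (r / m) (μ / M))) * envelope m t) :=
        mul_le_mul hexp key (mul_nonneg (eval_nonneg_of_coeff_nonneg hP (logPlus_nonneg _))
          (sq_nonneg _)) zero_le_one
    _ = _ := one_mul _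

lemma envelope_nonneg {m t : ℝ} (hm : 0 ≤ m) (ht : 0 ≤ t) : 0 ≤ envelope m t := by
  have : 0 ≤ m / t := div_nonneg hm ht
  unfold envelope
  positivity

lemma envelope_le_sqrt_mul_rpow {m t : ℝ} (ht : 0 < t) :
    envelope m t ≤ √m * t ^ (-(1 / 2) : ℝ) := by
  rw [rpow_neg ht.le, ← sqrt_eq_rpow, ← div_eq_mul_inv, ← sqrt_div' _ ht.le]
  exact mul_le_of_le_one_right (sqrt_nonneg _) (min_le_left _ _)

lemma envelope_le_mul_sqrt_mul_rpow {m t : ℝ} (hm : 0 ≤ m) (ht : 0 < t) :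
    envelope m t ≤ m * √m * t ^ (-(3 / 2) : ℝ) := by
  have h : t ^ (-(3 / 2) : ℝ) = (√t)⁻¹ * t⁻¹ := by
    rw [show (-(3 / 2) : ℝ) = -(1 / 2) + -1 by norm_num, rpow_add ht, rpow_neg ht.le,
      ← sqrt_eq_rpow, rpow_neg_one]
  rw [h, envelope, sqrt_div hm]
  calc √m / √t * min 1 (m / t) ≤ √m / √t * (m / t) := by gcongr; exact min_le_right _ _
    _ = m * √m * ((√t)⁻¹ * t⁻¹) := by ring

lemma integrableOn_sqrt_mul_rpow (m : ℝ) {a : ℝ} (ha : 0 ≤ a) :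
    IntegrableOn (fun t : ℝ => √m * t ^ (-(1 / 2) : ℝ)) (Ioc 0 a) :=
  ((intervalIntegrable_iff_integrableOn_Ioc_of_le ha).1
    (intervalIntegral.intervalIntegrable_rpow' (by norm_num))).const_mul _

lemma integrableOn_mul_sqrt_mul_rpow (m : ℝ) {a : ℝ} (ha : 0 < a) :
    IntegrableOn (fun t : ℝ => m * √m * t ^ (-(3 / 2) : ℝ)) (Ioi a) :=
  (integrableOn_Ioi_rpow_of_lt (by norm_num) ha).const_mul _

lemma integral_sqrt_mul_rpow {m : ℝ} (hm : 0 ≤ m) :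
    ∫ t in Ioc 0 m, √m * t ^ (-(1 / 2) : ℝ) = 2 * m := by
  rw [integral_const_mul, ← intervalIntegral.integral_of_le hm,
    integral_rpow (Or.inl (by norm_num)), zero_rpow (by norm_num),
    show (-(1 / 2) : ℝ) + 1 = 1 / 2 by norm_num, ← sqrt_eq_rpow]
  linear_combination 2 * sq_sqrt hm

lemma integral_mul_sqrt_mul_rpow {m : ℝ} (hm : 0 < m) :
    ∫ t in Ioi m, m * √m * t ^ (-(3 / 2) : ℝ) = 2 * m := by
  rw [integral_const_mul, integral_Ioi_rpow_of_lt (by norm_num) hm,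
    show (-(3 / 2) : ℝ) + 1 = -(1 / 2) by norm_num, rpow_neg hm.le, ← sqrt_eq_rpow]
  have := (sqrt_pos.2 hm).ne'
  field_simp

lemma integrableOn_envelope {m : ℝ} (hm : 0 < m) : IntegrableOn (envelope m) (Ioi 0) := by
  have hmeas : AEStronglyMeasurable (envelope m) := by
    unfold envelope
    fun_prop
  rw [← Ioc_union_Ioi_eq_Ioi hm.le]
  refine IntegrableOn.union (Integrable.mono' (integrableOn_sqrt_mul_rpow m hm.le) hmeas.restrict
    (ae_restrict_of_forall_mem measurableSet_Ioc fun t ht => ?_))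
    (Integrable.mono' (integrableOn_mul_sqrt_mul_rpow m hm) hmeas.restrict
    (ae_restrict_of_forall_mem measurableSet_Ioi fun t ht => ?_))
  · rw [norm_of_nonneg (envelope_nonneg hm.le ht.1.le)]
    exact envelope_le_sqrt_mul_rpow ht.1
  · have ht0 : 0 < t := hm.trans ht
    rw [norm_of_nonneg (envelope_nonneg hm.le ht0.le)]
    exact envelope_le_mul_sqrt_mul_rpow hm.le ht0

lemma setIntegral_envelope_le {m : ℝ} (hm : 0 < m) {s : Set ℝ} (hs : s ⊆ Ioi 0) :
    ∫ t in s, envelope m t ≤ 4 * m := by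
  have hint := integrableOn_envelope hm
  have hIoc : IntegrableOn (envelope m) (Ioc 0 m) := hint.mono_set Ioc_subset_Ioi_self
  have hIoi := hint.mono_set (Ioi_subset_Ioi hm.le)
  calc ∫ t in s, envelope m t ≤ ∫ t in Ioi 0, envelope m t :=
        setIntegral_mono_set hint (ae_restrict_of_forall_mem measurableSet_Ioi
          fun t ht => envelope_nonneg hm.le (le_of_lt ht)) hs.eventuallyLE
    _ = (∫ t in Ioc 0 m, envelope m t) + ∫ t in Ioi m, envelope m t := by
        rw [← setIntegral_union Ioc_disjoint_Ioi_same measurableSet_Ioi hIoc hIoi,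
          Ioc_union_Ioi_eq_Ioi hm.le]
    _ ≤ (∫ t in Ioc 0 m, √m * t ^ (-(1 / 2) : ℝ)) + ∫ t in Ioi m, m * √m * t ^ (-(3 / 2) : ℝ) :=
        add_le_add
          (setIntegral_mono_on hIoc (integrableOn_sqrt_mul_rpow m hm.le)
            measurableSet_Ioc fun t ht => envelope_le_sqrt_mul_rpow ht.1)
          (setIntegral_mono_on hIoi
            (integrableOn_mul_sqrt_mul_rpow m hm) measurableSet_Ioi
            fun t ht => envelope_le_mul_sqrt_mul_rpow hm.le (hm.trans ht))
    _ = 4 * m := by rw [integral_sqrt_mul_rpow hm.le, integral_mul_sqrt_mul_rpow hm]; ring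

theorem stmt2 (n : ℕ) (P : Polynomial ℝ) (hPdeg : P.natDegree ≤ n)
    (hPcoeff : ∀ i, 0 ≤ P.coeff i) :
    ∃ P' : Polynomial ℝ, P'.natDegree ≤ n ∧ (∀ i, 0 ≤ P'.coeff i) ∧
      ∀ (α : ℝ), 0 < α → ∀ (k : EuclideanSpace ℝ (Fin 4)) (M r Λ Λ₀ m μ : ℝ),
        0 < M → M ≤ r → 0 ≤ Λ → Λ ≤ Λ₀ → Λ ≤ m → m ≤ μ → μ ≤ Λ₀ →
        (∫ t in Set.Ioo Λ Λ₀,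
            (1 / t ^ 2) * Real.exp (-‖k‖ ^ 2 / (α * t ^ 2)) *
              P.eval (logPlus (max (r / min t m) (max t μ / M))) * min t m ^ 2)
          ≤ P'.eval (logPlus (max (r / m) (μ / M))) * m := by
  refine ⟨C 4 * majorant P n, (natDegree_C_mul_le _ _).trans (natDegree_majorant_le P n),
    fun i => by simpa using mul_nonneg zero_le_four (coeff_majorant_nonneg hPcoeff n i), ?_⟩
  intro α hα k M r Λ Λ₀ m μ hM hMr hΛ _ hΛm hmμ _
  have hIoo : Ioo Λ Λ₀ ⊆ Ioi 0 := fun t ht => hΛ.trans_lt ht.1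
  rcases (hΛ.trans hΛm).eq_or_lt with rfl | hm
  · rw [setIntegral_congr_fun measurableSet_Ioo (g := 0)
      fun t ht => by simp [min_eq_right (show 0 < t from hIoo ht).le]]
    simp
  set K := (majorant P n).eval (logPlus (max (r / m) (μ / M)))
  have hK : 0 ≤ K := eval_nonneg_of_coeff_nonneg (coeff_majorant_nonneg hPcoeff n)
    (logPlus_nonneg _)
  calc _ ≤ ∫ t in Ioo Λ Λ₀, K * envelope m t := by
        refine integral_mono_of_nonneg (ae_restrict_of_forall_mem measurableSet_Ioo fun t ht => ?_)
          ((integrableOn_envelope hm).mono_set hIoo |>.const_mul K)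
          (ae_restrict_of_forall_mem measurableSet_Ioo fun t ht =>
            integrand_le_majorant_mul_envelope hPdeg hPcoeff (sq_nonneg ‖k‖) hα hM hMr hm hmμ
              (hIoo ht))
        have := eval_nonneg_of_coeff_nonneg hPcoeff (logPlus_nonneg
          (max (r / min t m) (max t μ / M)))
        have : 0 < t := hIoo ht
        positivity
    _ = K * ∫ t in Ioo Λ Λ₀, envelope m t := integral_const_mul K _
    _ ≤ K * (4 * m) := by gcongr; exact setIntegral_envelope_le hm hIoo
    _ = _ := by rw [eval_mul, eval_C]; ring
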